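/- Let d = d_1 d_2 where d_1 < d_2 are distinct primes. Two maximal lines through the origin in Z(d) × Z(d) whose factorizations (via CRT) have the same second component line but different first component lines, intersect in exactly d_2 points. -/

import Mathlib

/-- The line through the origin in `Z(e) × Z(e)` generated by `(ν, μ)`. -/
def line (e : ℕ) (ν μ : ZMod e) : Set (ZMod e × ZMod e) :=
  {p | ∃ α : ZMod e, p = (ν * α, μ * α)}

/-- First CRT component of a subset of `Z(d₁d₂) × Z(d₁d₂)`:  the point `(m, n)` is sent
to `(m₁, n̄₁) = (m mod d₁, t₁·(n mod d₁))`. -/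
def comp1 (d1 d2 : ℕ) (t1 : ZMod d1) (L : Set (ZMod (d1 * d2) × ZMod (d1 * d2))) :
    Set (ZMod d1 × ZMod d1) :=
  (fun p : ZMod (d1 * d2) × ZMod (d1 * d2) =>
    (ZMod.castHom (dvd_mul_right d1 d2) (ZMod d1) p.1,
     t1 * ZMod.castHom (dvd_mul_right d1 d2) (ZMod d1) p.2)) '' L

/-- Second CRT component of a subset of `Z(d₁d₂) × Z(d₁d₂)`:  the point `(m, n)` is sent
to `(m₂, n̄₂) = (m mod d₂, t₂·(n mod d₂))`. -/
def comp2 (d1 d2 : ℕ) (t2 : ZMod d2) (L : Set (ZMod (d1 * d2) × ZMod (d1 * d2))) :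
    Set (ZMod d2 × ZMod d2) :=
  (fun p : ZMod (d1 * d2) × ZMod (d1 * d2) =>
    (ZMod.castHom (dvd_mul_left d2 d1) (ZMod d2) p.1,
     t2 * ZMod.castHom (dvd_mul_left d2 d1) (ZMod d2) p.2)) '' L

/-!
The CRT coordinates identify `Z(d) × Z(d)` with `(Z(d₁) × Z(d₁)) × (Z(d₂) × Z(d₂))` and carry a
line `L` onto `L⁽¹⁾ × L⁽²⁾`. Distinct lines through the origin of the plane over the field
`Z(d₁)` meet only at the origin, so `L ∩ L'` corresponds to `{0} × L⁽²⁾`. Finally `L⁽²⁾` has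
`d₂` points: `d₁d₂ = |L| = |L⁽¹⁾| |L⁽²⁾|` while `|L⁽ⁱ⁾| ≤ dᵢ`.
-/

open Set Function ZMod

section Line

variable {e : ℕ}

lemma zero_mem_line (ν μ : ZMod e) : (0 : ZMod e × ZMod e) ∈ line e ν μ :=
  ⟨0, by simp [Prod.zero_eq_mk]⟩

lemma line_eq_range (ν μ : ZMod e) : line e ν μ = range fun α => (ν * α, μ * α) := by
  ext p
  simp [line, eq_comm]

lemma ncard_line_le [NeZero e] (ν μ : ZMod e) : (line e ν μ).ncard ≤ e := by
  rw [line_eq_range, ← image_univ]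
  calc _ ≤ (univ : Set (ZMod e)).ncard := ncard_image_le finite_univ
    _ = e := by rw [ncard_univ, Nat.card_zmod]

lemma line_mul_unit (ν μ : ZMod e) (u : (ZMod e)ˣ) : line e (ν * u) (μ * u) = line e ν μ := by
  ext p
  constructor
  · rintro ⟨α, rfl⟩
    exact ⟨u * α, by simp [mul_assoc]⟩
  · rintro ⟨α, rfl⟩
    exact ⟨↑u⁻¹ * α, by simp [mul_assoc]⟩

lemma line_eq_of_mem {p : ℕ} [Fact p.Prime] {ν μ : ZMod p} {q : ZMod p × ZMod p}
    (hq : q ∈ line p ν μ) (hq0 : q ≠ 0) : line p ν μ = line p q.1 q.2 := by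
  obtain ⟨α, rfl⟩ := hq
  have hα : α ≠ 0 := by
    rintro rfl
    simp at hq0
  exact (line_mul_unit ν μ (Units.mk0 α hα)).symm

lemma line_inter_line_of_ne {p : ℕ} [Fact p.Prime] {ν μ ν' μ' : ZMod p}
    (h : line p ν μ ≠ line p ν' μ') : line p ν μ ∩ line p ν' μ' = {0} := by
  refine eq_singleton_iff_unique_mem.mpr ⟨⟨zero_mem_line _ _, zero_mem_line _ _⟩, ?_⟩
  rintro q ⟨hq, hq'⟩
  by_contra hq0
  exact h ((line_eq_of_mem hq hq0).trans (line_eq_of_mem hq' hq0).symm)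

lemma image_line_castHom {N n : ℕ} (h : n ∣ N) (t : ZMod n) (ν μ : ZMod N) :
    (fun p : ZMod N × ZMod N => (castHom h (ZMod n) p.1, t * castHom h (ZMod n) p.2)) ''
        line N ν μ =
      line n (castHom h (ZMod n) ν) (t * castHom h (ZMod n) μ) := by
  ext q
  constructor
  · rintro ⟨_, ⟨α, rfl⟩, rfl⟩
    exact ⟨castHom h (ZMod n) α, by simp only [map_mul, mul_assoc]⟩
  · rintro ⟨a, rfl⟩
    obtain ⟨α, rfl⟩ := castHom_surjective h a
    exact ⟨_, ⟨α, rfl⟩, by simp only [map_mul, mul_assoc]⟩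

end Line

section CRT

variable {m n : ℕ}

lemma comp1_line (t : ZMod m) (ν μ : ZMod (m * n)) :
    comp1 m n t (line (m * n) ν μ) =
      line m (castHom (dvd_mul_right m n) (ZMod m) ν)
        (t * castHom (dvd_mul_right m n) (ZMod m) μ) :=
  image_line_castHom _ t ν μ

lemma comp2_line (t : ZMod n) (ν μ : ZMod (m * n)) :
    comp2 m n t (line (m * n) ν μ) =
      line n (castHom (dvd_mul_left n m) (ZMod n) ν)
        (t * castHom (dvd_mul_left n m) (ZMod n) μ) :=
  image_line_castHom _ t ν μ

lemma bijective_castHom_prod_castHom (h : m.Coprime n) :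
    Bijective ((castHom (dvd_mul_right m n) (ZMod m)).prod
      (castHom (dvd_mul_left n m) (ZMod n))) := by
  rw [Subsingleton.elim ((castHom _ _).prod _)
    (chineseRemainder h : ZMod (m * n) →+* ZMod m × ZMod n)]
  exact (chineseRemainder h).bijective

/-- The point `(m, n)` of `Z(d₁d₂) × Z(d₁d₂)` in the coordinates `((m₁, n̄₁), (m₂, n̄₂))`. -/
def crtPoint (t1 : ZMod m) (t2 : ZMod n) (p : ZMod (m * n) × ZMod (m * n)) :
    (ZMod m × ZMod m) × (ZMod n × ZMod n) :=
  ((castHom (dvd_mul_right m n) (ZMod m) p.1, t1 * castHom (dvd_mul_right m n) (ZMod m) p.2),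
   (castHom (dvd_mul_left n m) (ZMod n) p.1, t2 * castHom (dvd_mul_left n m) (ZMod n) p.2))

lemma crtPoint_injective (h : m.Coprime n) {t1 : ZMod m} {t2 : ZMod n} (ht1 : IsUnit t1)
    (ht2 : IsUnit t2) : Injective (crtPoint t1 t2) := by
  rintro ⟨x, y⟩ ⟨x', y'⟩ hxy
  simp only [crtPoint, Prod.mk.injEq] at hxy
  obtain ⟨⟨hx1, hy1⟩, hx2, hy2⟩ := hxy
  have hinj := (bijective_castHom_prod_castHom h).injective
  exact Prod.ext (hinj (Prod.ext hx1 hx2))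
    (hinj (Prod.ext (ht1.mul_left_cancel hy1) (ht2.mul_left_cancel hy2)))

lemma image_crtPoint_line (h : m.Coprime n) (t1 : ZMod m) (t2 : ZMod n) (ν μ : ZMod (m * n)) :
    crtPoint t1 t2 '' line (m * n) ν μ =
      comp1 m n t1 (line (m * n) ν μ) ×ˢ comp2 m n t2 (line (m * n) ν μ) := by
  rw [comp1_line, comp2_line]
  ext q
  constructor
  · rintro ⟨_, ⟨α, rfl⟩, rfl⟩
    exact ⟨⟨castHom (dvd_mul_right m n) _ α, by simp only [crtPoint, map_mul, mul_assoc]⟩,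
      ⟨castHom (dvd_mul_left n m) _ α, by simp only [crtPoint, map_mul, mul_assoc]⟩⟩
  · rintro ⟨⟨a, ha⟩, ⟨b, hb⟩⟩
    obtain ⟨α, hα⟩ := (bijective_castHom_prod_castHom h).surjective (a, b)
    obtain ⟨hαa, hαb⟩ := Prod.mk.inj hα
    refine ⟨_, ⟨α, rfl⟩, Prod.ext ?_ ?_⟩
    · rw [ha]
      simp only [crtPoint, map_mul, hαa, mul_assoc]
    · rw [hb]
      simp only [crtPoint, map_mul, hαb, mul_assoc]

lemma ncard_comp2_line_of_maximal [NeZero m] [NeZero n] (h : m.Coprime n) {t1 : ZMod m}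
    {t2 : ZMod n} (ht1 : IsUnit t1) (ht2 : IsUnit t2) {ν μ : ZMod (m * n)}
    (hmax : (line (m * n) ν μ).ncard = m * n) :
    (comp2 m n t2 (line (m * n) ν μ)).ncard = n := by
  have hcard := ncard_image_of_injective (line (m * n) ν μ) (crtPoint_injective h ht1 ht2)
  rw [image_crtPoint_line h, ncard_prod, hmax] at hcard
  have hle1 : (comp1 m n t1 (line (m * n) ν μ)).ncard ≤ m :=
    comp1_line t1 ν μ ▸ ncard_line_le _ _
  have hle2 : (comp2 m n t2 (line (m * n) ν μ)).ncard ≤ n :=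
    comp2_line t2 ν μ ▸ ncard_line_le _ _
  have hm : 0 < m := Nat.pos_of_neZero m
  nlinarith

end CRT

theorem maximal_lines_same_second_component_general (d1 d2 : ℕ)
    (h1 : d1.Prime) (h2 : d2.Prime) (hlt : d1 < d2)
    (t1 : ZMod d1) (t2 : ZMod d2)
    (ht1 : t1 * (d2 : ZMod d1) = 1) (ht2 : t2 * (d1 : ZMod d2) = 1)
    (ν μ ν' μ' : ZMod (d1 * d2))
    (hmax : (line (d1 * d2) ν μ).ncard = d1 * d2)
    (hsame : comp2 d1 d2 t2 (line (d1 * d2) ν μ) = comp2 d1 d2 t2 (line (d1 * d2) ν' μ'))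
    (hdiff : comp1 d1 d2 t1 (line (d1 * d2) ν μ) ≠ comp1 d1 d2 t1 (line (d1 * d2) ν' μ')) :
    (line (d1 * d2) ν μ ∩ line (d1 * d2) ν' μ').ncard = d2 := by
  have := Fact.mk h1
  have := Fact.mk h2
  have hcop : d1.Coprime d2 := (Nat.coprime_primes h1 h2).mpr hlt.ne
  have hu1 := IsUnit.of_mul_eq_one _ ht1
  have hu2 := IsUnit.of_mul_eq_one _ ht2
  have hinj := crtPoint_injective hcop hu1 hu2
  have hfirst :
      comp1 d1 d2 t1 (line (d1 * d2) ν μ) ∩ comp1 d1 d2 t1 (line (d1 * d2) ν' μ') = {0} := by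
    rw [comp1_line, comp1_line] at hdiff ⊢
    exact line_inter_line_of_ne hdiff
  calc (line (d1 * d2) ν μ ∩ line (d1 * d2) ν' μ').ncard
      = (crtPoint t1 t2 '' (line (d1 * d2) ν μ ∩ line (d1 * d2) ν' μ')).ncard :=
        (ncard_image_of_injective _ hinj).symm
    _ = (({0} : Set (ZMod d1 × ZMod d1)) ×ˢ comp2 d1 d2 t2 (line (d1 * d2) ν μ)).ncard := by
        rw [image_inter hinj, image_crtPoint_line hcop, image_crtPoint_line hcop,
          prod_inter_prod, hfirst, ← hsame, inter_self]
    _ = d2 := by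
        rw [ncard_prod, ncard_singleton, one_mul,
          ncard_comp2_line_of_maximal hcop hu1 hu2 hmax]

/-- Let `d = d₁d₂` with `d₁ < d₂` primes.  Two maximal lines through the origin whose
CRT factorizations have the same second component line but different first component
lines intersect in exactly `d₂` points. -/
theorem maximal_lines_same_second_component (d1 d2 : ℕ)
    (h1 : d1.Prime) (h2 : d2.Prime) (hlt : d1 < d2)
    (t1 : ZMod d1) (t2 : ZMod d2)
    (ht1 : t1 * (d2 : ZMod d1) = 1) (ht2 : t2 * (d1 : ZMod d2) = 1)
    (ν μ ν' μ' : ZMod (d1 * d2))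
    (hmax : (line (d1 * d2) ν μ).ncard = d1 * d2)
    (hmax' : (line (d1 * d2) ν' μ').ncard = d1 * d2)
    (hsame : comp2 d1 d2 t2 (line (d1 * d2) ν μ) = comp2 d1 d2 t2 (line (d1 * d2) ν' μ'))
    (hdiff : comp1 d1 d2 t1 (line (d1 * d2) ν μ) ≠ comp1 d1 d2 t1 (line (d1 * d2) ν' μ')) :
    (line (d1 * d2) ν μ ∩ line (d1 * d2) ν' μ').ncard = d2 :=
  maximal_lines_same_second_component_general d1 d2 h1 h2 hlt t1 t2 ht1 ht2 ν μ ν' μ' hmax hsame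
    hdiff
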